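/- The number of connected components of the meander whose upper arch configuration is {(1,2),(3,4),…,(2n+1,2n+2)} and whose lower arch configuration is the rainbow matching {(1,2n+2),(2,2n+1),…,(n+1,n+2)} equals 1 + ⌊n/2⌋. -/

import Mathlib

/-- A Dyck path of size `n`: a list of booleans (`true` = north step, `false` = east step)
from `(0,0)` to `(n,n)` staying weakly above the diagonal `y = x`. -/
def IsDyckPath (n : ℕ) (w : List Bool) : Prop :=
  w.length = 2 * n ∧ w.count true = n ∧
    ∀ k, (w.take k).count false ≤ (w.take k).count true

/-- The `y`-coordinate of the lattice point reached after `k` steps. -/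
def ycoord (w : List Bool) (k : ℕ) : ℕ := (w.take k).count true

/-- The `x`-coordinate of the lattice point reached after `k` steps. -/
def xcoord (w : List Bool) (k : ℕ) : ℕ := (w.take k).count false

/-- A peak: a north step at position `i` followed by an east step. -/
def IsPeak (w : List Bool) (i : ℕ) : Prop := w[i]? = some true ∧ w[i+1]? = some false

/-- A valley: an east step at position `i` followed by a north step. -/
def IsValley (w : List Bool) (i : ℕ) : Prop := w[i]? = some false ∧ w[i+1]? = some true

/-- Height above the diagonal after `k` steps. -/
def pdepth (w : List Bool) (k : ℕ) : ℤ := (ycoord w k : ℤ) - (xcoord w k : ℤ)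

/-- Step `i` (a north step) of `w` is matched with step `j` (an east step):
the facing east step at the same height (balanced-parentheses matching). -/
def Matches (w : List Bool) (i j : ℕ) : Prop :=
  i < j ∧ w[i]? = some true ∧ w[j]? = some false ∧
    pdepth w (j + 1) = pdepth w i ∧ ∀ k, i < k → k ≤ j → pdepth w i < pdepth w k

/-- The graph on `m` points whose edges are the upper arches and the lower arches;
its connected components are the components of the corresponding meander. -/
def meanderGraph (m : ℕ) (upper lower : ℕ → ℕ → Prop) : SimpleGraph (Fin m) where
  Adj i j := i ≠ j ∧ (upper i.1 j.1 ∨ upper j.1 i.1 ∨ lower i.1 j.1 ∨ lower j.1 i.1)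
  symm := by
    constructor
    intro i j h
    exact ⟨h.1.symm, by tauto⟩
  loopless := by
    constructor
    intro i h
    exact h.1 rfl

/-- The number of components of the meander with the matching of `P` above and the
matching of `Q` below. -/
noncomputable def trajPQ (n : ℕ) (P Q : List Bool) : ℕ :=
  Nat.card (meanderGraph (2 * n) (Matches P) (Matches Q)).ConnectedComponent

/-- The number of components of the meander with the matching of `P` above and the
rainbow matching `i ↦ 2n - 1 - i` below. -/
noncomputable def traj (n : ℕ) (P : List Bool) : ℕ :=
  Nat.card (meanderGraph (2 * n) (Matches P)
    (fun i j => i + j + 1 = 2 * n)).ConnectedComponent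

/-- No peak with even `y`-coordinate and no valley with odd `x`-coordinate. -/
def NoBadCorner (w : List Bool) : Prop :=
  (∀ i, IsPeak w i → Odd (ycoord w (i + 1))) ∧
  (∀ i, IsValley w i → Even (xcoord w (i + 1)))

/-- A bad corner: a peak with even `y`-coordinate or a valley with odd `x`-coordinate. -/
def IsBadCorner (w : List Bool) (i : ℕ) : Prop :=
  (IsPeak w i ∧ Even (ycoord w (i + 1))) ∨ (IsValley w i ∧ Odd (xcoord w (i + 1)))

/-- Interchange the two steps of the corner at positions `i`, `i+1`. -/
def swapCorner (w : List Bool) (i : ℕ) : List Bool :=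
  (w.set i (w.getD (i + 1) true)).set (i + 1) (w.getD i true)

open Classical in
/-- The involution `φ`: swap the two steps of the first bad corner, if any. -/
noncomputable def phiMap (w : List Bool) : List Bool :=
  if h : ∃ i, IsBadCorner w i then swapCorner w (Nat.find h) else w

/-- The number of unit squares between a Dyck path and the diagonal `y = x`. -/
def area (w : List Bool) : ℕ :=
  ((List.range w.length).map fun i =>
    if w.getD i true then 0 else ycoord w i - xcoord w i - 1).sum

/-- The zigzag Dyck path `(NE)^m`. -/
def zigzag (m : ℕ) : List Bool := (List.replicate m [true, false]).flatten

/-- `N^{2a_1} E^{2b_1} ⋯ N^{2a_t} E^{2b_t}` for `ab = [(a_1,b_1),…,(a_t,b_t)]`. -/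
def doubledWord (ab : List (ℕ × ℕ)) : List Bool :=
  (ab.map fun p => List.replicate (2 * p.1) true ++ List.replicate (2 * p.2) false).flatten

/-- `N^{a_1} E^{b_1} ⋯ N^{a_t} E^{b_t}` for `ab = [(a_1,b_1),…,(a_t,b_t)]`. -/
def halfWord (ab : List (ℕ × ℕ)) : List Bool :=
  (ab.map fun p => List.replicate p.1 true ++ List.replicate p.2 false).flatten

/-- All peaks at odd height (`height` = `y - x` at the peak's lattice point). -/
def AllPeaksOdd (w : List Bool) : Prop :=
  ∀ i, IsPeak w i → Odd (ycoord w (i + 1) - xcoord w (i + 1))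

/-- All peaks at even height. -/
def AllPeaksEven (w : List Bool) : Prop :=
  ∀ i, IsPeak w i → Even (ycoord w (i + 1) - xcoord w (i + 1))

/-- Steps of a Motzkin path: up, horizontal, down. -/
inductive MStep | U | H | D
deriving DecidableEq

/-- The total height change along a list of Motzkin steps. -/
def msum (l : List MStep) : ℤ :=
  (l.map fun s => match s with | MStep.U => 1 | MStep.H => 0 | MStep.D => -1).sum

/-- A Motzkin path of length `n`. -/
def IsMotzkin (n : ℕ) (l : List MStep) : Prop :=
  l.length = n ∧ msum l = 0 ∧ ∀ k, 0 ≤ msum (l.take k)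

/-- A Riordan path of length `n`: a Motzkin path with no horizontal step on the `x`-axis. -/
def IsRiordan (n : ℕ) (l : List MStep) : Prop :=
  IsMotzkin n l ∧ ∀ i, l[i]? = some MStep.H → msum (l.take i) ≠ 0

/-- The map `φ_A` from Dyck paths of size `n+1` (all peaks at odd height)
to Motzkin paths of length `n`: `v_j` is read off from steps `p_{2j} p_{2j+1}`. -/
def phiA (n : ℕ) (P : List Bool) : List MStep :=
  (List.range n).map fun j =>
    match P.getD (2 * j + 1) true, P.getD (2 * j + 2) true with
    | true, true => MStep.U
    | false, true => MStep.H
    | _, _ => MStep.D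

/-- The map `φ_B` from Dyck paths of size `n` (all peaks at even height)
to Riordan paths of length `n`: `u_j` is read off from steps `p_{2j-1} p_{2j}`. -/
def phiB (n : ℕ) (P : List Bool) : List MStep :=
  (List.range n).map fun j =>
    match P.getD (2 * j) true, P.getD (2 * j + 1) true with
    | true, true => MStep.U
    | false, true => MStep.H
    | _, _ => MStep.D

/-! Collapsing each upper arch `(2p, 2p+1)` to its index `p`, the lower (rainbow) arch through
`2p` or `2p+1` leads to the arch `n - p`. So the components correspond to the orbits of the
involution `p ↦ n - p` on `{0, …, n}`, each with the representative `min p (n - p) ≤ n / 2`. -/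

theorem SimpleGraph.Reachable.eq_of_forall_adj {V β : Type*} {G : SimpleGraph V} {f : V → β}
    (hf : ∀ a b, G.Adj a b → f a = f b) {a b : V} (h : G.Reachable a b) : f a = f b := by
  obtain ⟨w⟩ := h
  induction w with
  | nil => rfl
  | cons hadj _ ih => exact (hf _ _ hadj).trans ih

theorem SimpleGraph.natCard_connectedComponent_eq_of_reachable_iff {V β : Type*}
    {G : SimpleGraph V} (f : V → β) (hf : Function.Surjective f)
    (h : ∀ a b, G.Reachable a b ↔ f a = f b) : Nat.card G.ConnectedComponent = Nat.card β :=
  Nat.card_congr ((Quot.congrRight h).trans (Setoid.quotientKerEquivOfSurjective f hf))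

theorem meanderGraph_adj {m : ℕ} {upper lower : ℕ → ℕ → Prop} {i j : Fin m} :
    (meanderGraph m upper lower).Adj i j ↔
      i ≠ j ∧ (upper i.1 j.1 ∨ upper j.1 i.1 ∨ lower i.1 j.1 ∨ lower j.1 i.1) :=
  Iff.rfl

abbrev zigzagRainbowGraph (n : ℕ) : SimpleGraph (Fin (2 * (n + 1))) :=
  meanderGraph (2 * (n + 1)) (fun i j => Even i ∧ j = i + 1) (fun i j => i + j + 1 = 2 * (n + 1))

namespace zigzagRainbowGraph

variable {n : ℕ}

/-- The orbit of the upper arch through `i` under `p ↦ n - p`, by its least element. -/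
def orbitIndex (i : Fin (2 * (n + 1))) : Fin (n / 2 + 1) :=
  ⟨min (i.1 / 2) (n - i.1 / 2), by omega⟩

def orbitRep (k : Fin (n / 2 + 1)) : Fin (2 * (n + 1)) :=
  ⟨2 * k.1, by omega⟩

theorem orbitIndex_orbitRep (k : Fin (n / 2 + 1)) : orbitIndex (orbitRep k) = k :=
  Fin.ext (by simp only [orbitIndex, orbitRep]; omega)

theorem orbitIndex_eq_of_adj {a b : Fin (2 * (n + 1))} (h : (zigzagRainbowGraph n).Adj a b) :
    orbitIndex a = orbitIndex b := by
  obtain ⟨-, h⟩ := meanderGraph_adj.1 h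
  have ha := a.2
  have hb := b.2
  refine Fin.ext ?_
  simp only [orbitIndex]
  rcases h with ⟨⟨k, hk⟩, h⟩ | ⟨⟨k, hk⟩, h⟩ | h | h <;> omega

theorem adj_of_upper {a b : Fin (2 * (n + 1))} (ha : Even a.1) (hb : b.1 = a.1 + 1) :
    (zigzagRainbowGraph n).Adj a b :=
  meanderGraph_adj.2 ⟨fun hab => by rw [hab] at hb; omega, Or.inl ⟨ha, hb⟩⟩

theorem adj_of_lower {a b : Fin (2 * (n + 1))} (h : a.1 + b.1 + 1 = 2 * (n + 1)) :
    (zigzagRainbowGraph n).Adj a b :=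
  meanderGraph_adj.2 ⟨fun hab => by rw [hab] at h; omega, Or.inr (Or.inr (Or.inl h))⟩

theorem reachable_of_div_two (i : Fin (2 * (n + 1))) :
    (zigzagRainbowGraph n).Reachable ⟨2 * (i.1 / 2), by omega⟩ i := by
  rcases Nat.even_or_odd' i.1 with ⟨p, hp | hp⟩
  · rw [show (⟨2 * (i.1 / 2), _⟩ : Fin (2 * (n + 1))) = i from Fin.ext (by simp only; omega)]
  · exact (adj_of_upper ⟨p, by simp only; omega⟩ (by simp only; omega)).reachable

theorem reachable_mirror {p : ℕ} (hp : p ≤ n) :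
    (zigzagRainbowGraph n).Reachable ⟨2 * p, by omega⟩ ⟨2 * (n - p), by omega⟩ :=
  have hup : (zigzagRainbowGraph n).Adj ⟨2 * p, by omega⟩ ⟨2 * p + 1, by omega⟩ :=
    adj_of_upper ⟨p, by simp only; omega⟩ rfl
  hup.reachable.trans (adj_of_lower (by simp only; omega)).reachable

theorem reachable_orbitRep_orbitIndex (i : Fin (2 * (n + 1))) :
    (zigzagRainbowGraph n).Reachable i (orbitRep (orbitIndex i)) := by
  refine (reachable_of_div_two i).symm.trans ?_
  by_cases h : i.1 / 2 ≤ n - i.1 / 2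
  · rw [show orbitRep (orbitIndex i) = ⟨2 * (i.1 / 2), by omega⟩ from
      Fin.ext (by simp only [orbitRep, orbitIndex]; omega)]
  · rw [show orbitRep (orbitIndex i) = ⟨2 * (n - i.1 / 2), by omega⟩ from
      Fin.ext (by simp only [orbitRep, orbitIndex]; omega)]
    exact reachable_mirror (by omega)

theorem reachable_iff_orbitIndex_eq (a b : Fin (2 * (n + 1))) :
    (zigzagRainbowGraph n).Reachable a b ↔ orbitIndex a = orbitIndex b := by
  refine ⟨SimpleGraph.Reachable.eq_of_forall_adj fun _ _ => orbitIndex_eq_of_adj, fun h => ?_⟩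
  refine (reachable_orbitRep_orbitIndex a).trans ?_
  rw [h]
  exact (reachable_orbitRep_orbitIndex b).symm

end zigzagRainbowGraph

/-- The meander whose upper arches are `{(1,2),(3,4),…,(2n+1,2n+2)}` and whose lower arches
form the rainbow matching has exactly `1 + ⌊n/2⌋` components (points `0`-indexed here). -/
theorem zigzag_meander_components (n : ℕ) :
    Nat.card (meanderGraph (2 * (n + 1))
      (fun i j => Even i ∧ j = i + 1)
      (fun i j => i + j + 1 = 2 * (n + 1))).ConnectedComponent = 1 + n / 2 := by
  have hsurj : Function.Surjective (zigzagRainbowGraph.orbitIndex (n := n)) :=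
    fun k => ⟨_, zigzagRainbowGraph.orbitIndex_orbitRep k⟩
  rw [SimpleGraph.natCard_connectedComponent_eq_of_reachable_iff _ hsurj
    zigzagRainbowGraph.reachable_iff_orbitIndex_eq, Nat.card_fin]
  omega
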